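/- Let T be a tournament on n vertices in which every vertex has out-degree in {⌊(n-1)/2⌋, ⌈(n-1)/2⌉} and which contains no induced C₃⁺ and no induced C₃⁻. Then T is a carousel, i.e., T ∈ 𝒞_n. -/

import Mathlib

open Finset
open scoped Classical

section Defs

variable {V : Type*}

/-- A tournament: irreflexive, and exactly one arc between any two distinct vertices. -/
def IsTournament (r : V → V → Prop) : Prop :=
  (∀ v, ¬ r v v) ∧ ∀ u v : V, u ≠ v → (r u v ↔ ¬ r v u)

/-- Out-degree of a vertex. -/
noncomputable def outDeg [Fintype V] (r : V → V → Prop) (v : V) : ℕ :=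
  (Finset.univ.filter (fun w => r v w)).card

/-- `s` induces a cyclic triangle `C₃`. -/
def IsC3 (r : V → V → Prop) (s : Finset V) : Prop :=
  ∃ a b c : V, s = {a, b, c} ∧ r a b ∧ r b c ∧ r c a

/-- `s` induces a transitive triangle `TT₃`. -/
def IsTT3 (r : V → V → Prop) (s : Finset V) : Prop :=
  ∃ a b c : V, a ≠ b ∧ a ≠ c ∧ b ≠ c ∧ s = {a, b, c} ∧ r a b ∧ r a c ∧ r b c

/-- `s` induces a transitive tournament on 4 vertices `TT₄`. -/
def IsTT4 (r : V → V → Prop) (s : Finset V) : Prop :=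
  ∃ a b c d : V, a ≠ b ∧ a ≠ c ∧ a ≠ d ∧ b ≠ c ∧ b ≠ d ∧ c ≠ d ∧
    s = {a, b, c, d} ∧ r a b ∧ r a c ∧ r a d ∧ r b c ∧ r b d ∧ r c d

/-- `s` induces `C₃⁺`: a directed 3-cycle plus a source vertex dominating it. -/
def IsC3plus (r : V → V → Prop) (s : Finset V) : Prop :=
  ∃ v a b c : V, v ≠ a ∧ v ≠ b ∧ v ≠ c ∧ s = {v, a, b, c} ∧
    r v a ∧ r v b ∧ r v c ∧ r a b ∧ r b c ∧ r c a

/-- `s` induces `C₃⁻`: a directed 3-cycle plus a sink vertex dominated by it. -/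
def IsC3minus (r : V → V → Prop) (s : Finset V) : Prop :=
  ∃ v a b c : V, v ≠ a ∧ v ≠ b ∧ v ≠ c ∧ s = {v, a, b, c} ∧
    r a v ∧ r b v ∧ r c v ∧ r a b ∧ r b c ∧ r c a

/-- `s` induces `C₄`, the strongly connected 4-vertex tournament. -/
def IsC4 (r : V → V → Prop) (s : Finset V) : Prop :=
  ∃ a b c d : V, a ≠ b ∧ a ≠ c ∧ a ≠ d ∧ b ≠ c ∧ b ≠ d ∧ c ≠ d ∧
    s = {a, b, c, d} ∧ r a b ∧ r a c ∧ r d a ∧ r b c ∧ r b d ∧ r c d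

/-- Number of `k`-subsets of `A` satisfying `P`. -/
noncomputable def numCopiesIn (P : Finset V → Prop) (A : Finset V) (k : ℕ) : ℕ :=
  ((A.powersetCard k).filter P).card

/-- Number of `k`-subsets of the whole vertex set satisfying `P`. -/
noncomputable def numCopies [Fintype V] (P : Finset V → Prop) (k : ℕ) : ℕ :=
  numCopiesIn P Finset.univ k

end Defs

/-- Membership in the class `𝒞_n` of carousels, up to relabeling of the vertices. -/
def IsCarousel (n : ℕ) (r : Fin n → Fin n → Prop) : Prop :=
  ∃ e : Fin n ≃ Fin n, ∀ i j : Fin n,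
    ((0 < (j : ℤ) - (i : ℤ) ∧ 2 * ((j : ℤ) - (i : ℤ)) < (n : ℤ)) ∨
      (n : ℤ) < 2 * ((i : ℤ) - (j : ℤ))) →
    r (e i) (e j)

/-!
Since the out-degrees sum to `n(n-1)/2`, some vertex `v` has out-degree `⌊(n-1)/2⌋`. Without `C₃⁺`
every out-neighbourhood is transitive, and without `C₃⁻` every in-neighbourhood is, so `N⁺(v)` and
`N⁻(v)` are transitive chains `u₀ → u₁ → ⋯` and `w₀ → w₁ → ⋯`. Since there is no `C₃⁺` on
`{w_a, v, u_i, w_b}`, the vertices of `N⁻(v)` dominated by `u_i` form an initial segment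
`w₀, …, w_{k-1}`, and as `u_i` dominates exactly `u_{i+1}, …` inside `N⁺(v)`, the degree condition
at `u_i` pins `k` down to `i + 1` or `i + 1 + (|N⁻(v)| - |N⁺(v)|)`. These are exactly the arcs of
the carousel on `v, u₀, u₁, …, w₀, w₁, …`.
-/

/-- `IsCarousel n r` unfolds to `∃ e : Fin n ≃ Fin n, ∀ i j, carouselArc n i j → r (e i) (e j)`. -/
def carouselArc (m : ℕ) (i j : Fin m) : Prop :=
  (0 < (j : ℤ) - (i : ℤ) ∧ 2 * ((j : ℤ) - (i : ℤ)) < (m : ℤ)) ∨ (m : ℤ) < 2 * ((i : ℤ) - (j : ℤ))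

theorem Fin.mem_iff_lt_card_of_isLowerSet {q : ℕ} {B : Finset (Fin q)}
    (hB : IsLowerSet (B : Set (Fin q))) (b : Fin q) : b ∈ B ↔ (b : ℕ) < #B := by
  constructor
  · intro hb
    have := card_le_card fun x (hx : x ∈ Iic b) => hB (mem_Iic.mp hx) hb
    rw [Fin.card_Iic] at this
    omega
  · intro hb
    by_contra hnb
    have := card_le_card fun x (hx : x ∈ B) =>
      mem_Iio.mpr (lt_of_not_ge fun hbx => hnb (hB hbx hx))
    rw [Fin.card_Iio] at this
    omega

namespace IsTournament

variable {V : Type*} {r : V → V → Prop}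

theorem ne_of_rel (hT : IsTournament r) {a b : V} (h : r a b) : a ≠ b := by
  rintro rfl
  exact hT.1 a h

theorem asymm (hT : IsTournament r) {a b : V} (h : r a b) : ¬ r b a :=
  (hT.2 a b (hT.ne_of_rel h)).mp h

theorem rel_of_not_rel (hT : IsTournament r) {a b : V} (hab : a ≠ b) (h : ¬ r a b) : r b a :=
  (hT.2 b a hab.symm).mpr h

theorem injective_of_chain (hT : IsTournament r) {m : ℕ} {f : Fin m → V}
    (hf : ∀ i j, i < j → r (f i) (f j)) : Function.Injective f := by
  intro i j hij
  by_contra hne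
  rcases lt_or_gt_of_ne hne with h | h
  · exact hT.1 _ (hij ▸ hf i j h)
  · exact hT.1 _ (hij ▸ hf j i h)

theorem card_filter_rel_of_chain (hT : IsTournament r) {m : ℕ} {f : Fin m → V}
    (hf : ∀ i j, i < j → r (f i) (f j)) (i : Fin m) : #{j | r (f i) (f j)} = m - 1 - i := by
  rw [← Fin.card_Ioi]
  congr 1
  ext j
  simp only [mem_filter, mem_univ, true_and, mem_Ioi]
  refine ⟨fun h => ?_, hf i j⟩
  rcases lt_trichotomy i j with hij | rfl | hji
  · exact hij
  · exact absurd h (hT.1 _)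
  · exact absurd h (hT.asymm (hf j i hji))

theorem exists_fin_chain (hT : IsTournament r) (s : Finset V)
    (htrans : ∀ a ∈ s, ∀ b ∈ s, ∀ c ∈ s, r a b → r b c → r a c) :
    ∃ f : Fin #s → V, (∀ i, f i ∈ s) ∧ ∀ i j, i < j → r (f i) (f j) := by
  let lt : s → s → Prop := fun a b => r a b
  have : IsStrictTotalOrder s lt :=
    { trichotomous := fun a b hab hba => by
        by_contra hne
        exact hba (hT.rel_of_not_rel (Subtype.coe_ne_coe.mpr hne) hab)
      irrefl := fun a => hT.1 a
      trans := fun a b c => htrans a a.2 b b.2 c c.2 }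
  let _ : LinearOrder s := linearOrderOfSTO lt
  let e := monoEquivOfFin s (Fintype.card_coe s)
  exact ⟨fun i => e i, fun i => (e i).2, fun i j hij => e.strictMono hij⟩

theorem out_trans (hT : IsTournament r) (h : ∀ s, ¬ IsC3plus r s) {x a b c : V}
    (hxa : r x a) (hxb : r x b) (hxc : r x c) (hab : r a b) (hbc : r b c) : r a c := by
  refine hT.rel_of_not_rel (fun hca => hT.asymm hab (hca ▸ hbc)) fun hca => h {x, a, b, c} ?_
  exact ⟨x, a, b, c, hT.ne_of_rel hxa, hT.ne_of_rel hxb, hT.ne_of_rel hxc, rfl,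
    hxa, hxb, hxc, hab, hbc, hca⟩

theorem in_trans (hT : IsTournament r) (h : ∀ s, ¬ IsC3minus r s) {x a b c : V}
    (hax : r a x) (hbx : r b x) (hcx : r c x) (hab : r a b) (hbc : r b c) : r a c := by
  refine hT.rel_of_not_rel (fun hca => hT.asymm hab (hca ▸ hbc)) fun hca => h {x, a, b, c} ?_
  exact ⟨x, a, b, c, (hT.ne_of_rel hax).symm, (hT.ne_of_rel hbx).symm, (hT.ne_of_rel hcx).symm,
    rfl, hax, hbx, hcx, hab, hbc, hca⟩

section Degrees

variable [Fintype V]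

theorem card_out_add_card_in (hT : IsTournament r) (x : V) :
    #{y | r x y} + #{y | r y x} = Fintype.card V - 1 := by
  rw [← card_union_of_disjoint (disjoint_filter.mpr fun _ _ => hT.asymm), ← card_univ,
    ← card_erase_of_mem (mem_univ x)]
  congr 1
  ext y
  simp only [mem_union, mem_filter, mem_univ, true_and, mem_erase, and_true]
  refine ⟨?_, fun hy => ?_⟩
  · rintro (h | h)
    exacts [(hT.ne_of_rel h).symm, hT.ne_of_rel h]
  · by_cases h : r y x
    exacts [Or.inr h, Or.inl (hT.rel_of_not_rel hy h)]

theorem sum_outDeg_mul_two (hT : IsTournament r) :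
    (∑ x, outDeg r x) * 2 = Fintype.card V * (Fintype.card V - 1) := by
  have hswap : ∑ x, outDeg r x = ∑ x, #{y | r y x} := by
    simp only [outDeg, card_filter]
    exact sum_comm
  calc (∑ x, outDeg r x) * 2 = ∑ x, (#{y | r x y} + #{y | r y x}) := by
        rw [sum_add_distrib, ← hswap, mul_two]; rfl
    _ = Fintype.card V * (Fintype.card V - 1) := by
        simp only [hT.card_out_add_card_in, sum_const, card_univ, smul_eq_mul]

theorem exists_outDeg_eq_half [Nonempty V] (hT : IsTournament r)
    (hdeg : ∀ v, outDeg r v = (Fintype.card V - 1) / 2 ∨ outDeg r v = Fintype.card V / 2) :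
    ∃ v, outDeg r v = (Fintype.card V - 1) / 2 := by
  by_contra! hne
  have hall v : outDeg r v = Fintype.card V / 2 := (hdeg v).resolve_left (hne v)
  obtain ⟨v⟩ := ‹Nonempty V›
  obtain ⟨k, hk⟩ : ∃ k, Fintype.card V = 2 * k + 2 := ⟨(Fintype.card V - 2) / 2, by
    have := hne v; rw [hall v] at this; have := Fintype.card_pos (α := V); omega⟩
  have hsum := hT.sum_outDeg_mul_two
  simp only [hall, sum_const, card_univ, smul_eq_mul, hk] at hsum
  rw [show (2 * k + 2) / 2 = k + 1 by omega, show 2 * k + 2 - 1 = 2 * k + 1 by omega] at hsum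
  nlinarith

end Degrees

section Labelling

variable {P Q : ℕ} {v : V} {u : Fin P → V} {w : Fin Q → V}

theorem rel_iff_lt_card_of_chain (hT : IsTournament r) (h : ∀ s, ¬ IsC3plus r s) {x : V}
    (hvx : r v x) (hw : ∀ b, r (w b) v) (hw_chain : ∀ a b, a < b → r (w a) (w b)) (b : Fin Q) :
    r x (w b) ↔ (b : ℕ) < #{a | r x (w a)} := by
  have hlower : IsLowerSet (({a | r x (w a)} : Finset (Fin Q)) : Set (Fin Q)) := by
    intro b a hab hxb
    simp only [coe_filter, mem_univ, true_and, Set.mem_ofPred_eq] at hxb ⊢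
    rcases hab.lt_or_eq with hab | rfl
    · refine hT.rel_of_not_rel (fun hax => hT.asymm hvx (hax ▸ hw a)) fun hax => ?_
      exact hT.asymm (hw b) (hT.out_trans h (hw a) hax (hw_chain a b hab) hvx hxb)
    · exact hxb
  simpa only [mem_filter, mem_univ, true_and] using Fin.mem_iff_lt_card_of_isLowerSet hlower b

theorem bijective_cons_append [Fintype V] (hT : IsTournament r) (hu : ∀ i, r v (u i))
    (hw : ∀ b, r (w b) v) (hu_inj : Function.Injective u) (hw_inj : Function.Injective w)
    (hcard : P + Q + 1 = Fintype.card V) :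
    Function.Bijective (Fin.cons v (Fin.append u w) : Fin (P + Q + 1) → V) := by
  rw [Fintype.bijective_iff_injective_and_card, Fintype.card_fin]
  refine ⟨Fin.cons_injective_of_injective ?_ (Fin.append_injective_iff.mpr
    ⟨hu_inj, hw_inj, fun i b h => hT.asymm (hu i) (h ▸ hw b)⟩), hcard⟩
  rintro ⟨k, hk⟩
  induction k using Fin.addCases with
  | left i => exact hT.ne_of_rel (hu i) (by simpa only [Fin.append_left] using hk.symm)
  | right b => exact hT.ne_of_rel (hw b) (by simpa only [Fin.append_right] using hk)

theorem outDeg_eq_of_bijective_cons_append [Fintype V]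
    (hφ : Function.Bijective (Fin.cons v (Fin.append u w) : Fin (P + Q + 1) → V)) (x : V) :
    outDeg r x = (if r x v then 1 else 0) + #{i | r x (u i)} + #{b | r x (w b)} := by
  simp only [outDeg, card_filter]
  rw [← hφ.sum_comp, Fin.sum_univ_succ, Fin.sum_univ_add]
  simp [add_assoc]

theorem carouselArc_cons_append (hQ : Q = P ∨ Q = P + 1) (hu : ∀ i, r v (u i))
    (hw : ∀ b, r (w b) v) (hu_chain : ∀ i j, i < j → r (u i) (u j))
    (hw_chain : ∀ a b, a < b → r (w a) (w b))
    (huw : ∀ (i : Fin P) (b : Fin Q), (b : ℕ) ≤ i → r (u i) (w b))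
    (hwu : ∀ (i : Fin P) (b : Fin Q), (i : ℕ) + 1 + (Q - P) ≤ b → r (w b) (u i))
    (k l : Fin (P + Q + 1)) (hkl : carouselArc (P + Q + 1) k l) :
    r ((Fin.cons v (Fin.append u w) : Fin (P + Q + 1) → V) k)
      ((Fin.cons v (Fin.append u w) : Fin (P + Q + 1) → V) l) := by
  unfold carouselArc at hkl
  induction k using Fin.cases with
  | zero =>
    induction l using Fin.cases with
    | zero => simp only [Fin.val_zero] at hkl; omega
    | succ l =>
      induction l using Fin.addCases with
      | left i => simpa only [Fin.cons_zero, Fin.cons_succ, Fin.append_left] using hu i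
      | right b => simp only [Fin.val_zero, Fin.val_succ, Fin.val_natAdd] at hkl; omega
  | succ k =>
    induction k using Fin.addCases with
    | left i =>
      induction l using Fin.cases with
      | zero => simp only [Fin.val_zero, Fin.val_succ, Fin.val_castAdd] at hkl; omega
      | succ l =>
        simp only [Fin.cons_succ, Fin.append_left, Fin.val_succ, Fin.val_castAdd] at hkl ⊢
        induction l using Fin.addCases with
        | left j =>
          simp only [Fin.append_left, Fin.val_castAdd] at hkl ⊢
          exact hu_chain i j (Fin.lt_def.mpr (by omega))
        | right b =>
          simp only [Fin.append_right, Fin.val_natAdd] at hkl ⊢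
          exact huw i b (by omega)
    | right a =>
      simp only [Fin.cons_succ, Fin.append_right, Fin.val_succ, Fin.val_natAdd] at hkl ⊢
      induction l using Fin.cases with
      | zero => simpa only [Fin.cons_zero] using hw a
      | succ l =>
        simp only [Fin.cons_succ, Fin.val_succ] at hkl ⊢
        induction l using Fin.addCases with
        | left j =>
          simp only [Fin.append_left, Fin.val_castAdd] at hkl ⊢
          exact hwu j a (by omega)
        | right b =>
          simp only [Fin.append_right, Fin.val_natAdd] at hkl ⊢
          exact hw_chain a b (Fin.lt_def.mpr (by omega))

theorem exists_carousel_labelling [Fintype V] (hT : IsTournament r) {n : ℕ}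
    (hn : Fintype.card V = n) (hdeg : ∀ v, outDeg r v = (n - 1) / 2 ∨ outDeg r v = n / 2)
    (hplus : ∀ s, ¬ IsC3plus r s) (hminus : ∀ s, ¬ IsC3minus r s) :
    ∃ e : Fin n ≃ V, ∀ i j, carouselArc n i j → r (e i) (e j) := by
  rcases isEmpty_or_nonempty V with hV | hV
  · subst hn
    exact ⟨(Fintype.equivFin V).symm, fun i => isEmptyElim ((Fintype.equivFin V).symm i)⟩
  obtain ⟨v, hv⟩ := hT.exists_outDeg_eq_half (hn ▸ hdeg)
  obtain ⟨u, hu, hu_chain⟩ := hT.exists_fin_chain {x | r v x} fun a ha b hb c hc =>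
    hT.out_trans hplus (mem_filter.mp ha).2 (mem_filter.mp hb).2 (mem_filter.mp hc).2
  obtain ⟨w, hw, hw_chain⟩ := hT.exists_fin_chain {x | r x v} fun a ha b hb c hc =>
    hT.in_trans hminus (mem_filter.mp ha).2 (mem_filter.mp hb).2 (mem_filter.mp hc).2
  simp only [mem_filter, mem_univ, true_and] at hu hw
  have hP : #{x | r v x} = (Fintype.card V - 1) / 2 := hv
  have hPQ := hT.card_out_add_card_in v
  obtain rfl : n = #{x | r v x} + #{x | r x v} + 1 := by
    have := Fintype.card_pos (α := V)
    omega
  have hφ := hT.bijective_cons_append hu hw (hT.injective_of_chain hu_chain)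
    (hT.injective_of_chain hw_chain) hn.symm
  have hwindow i : i.1 + 1 ≤ #{b | r (u i) (w b)} ∧
      #{b | r (u i) (w b)} ≤ i + 1 + (#{x | r x v} - #{x | r v x}) := by
    have hdeg_i := outDeg_eq_of_bijective_cons_append (r := r) hφ (u i)
    rw [if_neg (hT.asymm (hu i)), hT.card_filter_rel_of_chain hu_chain] at hdeg_i
    have := hdeg (u i)
    omega
  refine ⟨Equiv.ofBijective _ hφ, fun k l hkl =>
    carouselArc_cons_append (by omega) hu hw hu_chain hw_chain (fun i b hbi => ?_)
      (fun i b hib => ?_) _ _ hkl⟩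
  · have := hwindow i
    exact (hT.rel_iff_lt_card_of_chain hplus (hu i) hw hw_chain b).mpr (by omega)
  · refine hT.rel_of_not_rel (fun h => hT.asymm (hu i) (h ▸ hw b)) fun hib' => ?_
    have := (hT.rel_iff_lt_card_of_chain hplus (hu i) hw hw_chain b).mp hib'
    have := hwindow i
    omega

end Labelling

end IsTournament

theorem stmt12 (n : ℕ) (r : Fin n → Fin n → Prop) (hT : IsTournament r)
    (hdeg : ∀ v : Fin n, outDeg r v = (n - 1) / 2 ∨ outDeg r v = n / 2)
    (h1 : ∀ s : Finset (Fin n), ¬ IsC3plus r s)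
    (h2 : ∀ s : Finset (Fin n), ¬ IsC3minus r s) :
    IsCarousel n r :=
  hT.exists_carousel_labelling (Fintype.card_fin n) hdeg h1 h2
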